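/- For every integer r ≥ 3, the rainbow 3-connectivity of the complete bipartite graph K_{r,r} equals 3, i.e., rc_3(K_{r,r}) = 3. -/

import Mathlib

/-!
Lower bound: `K_{r,r}` is bipartite, so a path between the two sides has odd length, while a
rainbow path under a 2-coloring has length at most 2. The edge is therefore the only rainbow path
between the sides, and there is no second one.

Upper bound: identify both sides with a commutative ring `R` in which `2 ≠ 0` (with `ℤ/r` for
`K_{r,r}`) and color the edge `i j` by `1` if `j - i = 0`, by `2` if `j - i = 1`, and by `0`
otherwise. Two vertices on the same side are seen in different colors by at least three common
neighbours, which gives three rainbow paths of length 2. Two vertices on opposite sides are joined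
by their edge and by two vertex-disjoint rainbow paths of length 3, chosen according to the
difference of the two vertices, with separate choices when it is `0`, `1` or `2`.
-/

open SimpleGraph

/-- The complete bipartite graph `K_{r,r}` with both parts `Fin r`. -/
abbrev Krr (r : ℕ) : SimpleGraph (Fin r ⊕ Fin r) :=
  completeBipartiteGraph (Fin r) (Fin r)

/-- A walk is a rainbow path (w.r.t. edge-coloring `c`) if it is a path and
all its edges receive pairwise distinct colors. -/
def RainbowPath {V α : Type*} {G : SimpleGraph V} (c : Sym2 V → α) {u v : V}
    (p : G.Walk u v) : Prop :=
  p.IsPath ∧ (p.edges.map c).Nodup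

/-- Two `u`-`v` walks are internally disjoint if they share no vertices other
than `u` and `v`. -/
def IntDisjoint {V : Type*} {G : SimpleGraph V} {u v : V}
    (p q : G.Walk u v) : Prop :=
  ∀ x, x ∈ p.support → x ∈ q.support → x = u ∨ x = v

/-- `G` admits a `j`-edge-coloring under which every two distinct vertices are
joined by at least `k` internally disjoint rainbow paths. -/
def HasRainbowKColoring {V : Type*} (G : SimpleGraph V) (k j : ℕ) : Prop :=
  ∃ c : Sym2 V → Fin j, ∀ u v : V, u ≠ v →
    ∃ P : Fin k → G.Walk u v, Function.Injective P ∧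
      (∀ i, RainbowPath c (P i)) ∧
      ∀ i i', i ≠ i' → IntDisjoint (P i) (P i')

/-- The rainbow `k`-connectivity: the least number of colors as above. -/
noncomputable def rck {V : Type*} (G : SimpleGraph V) (k : ℕ) : ℕ :=
  sInf {j | HasRainbowKColoring G k j}

open Function Sum

variable {V α : Type*} {G : SimpleGraph V} {c : Sym2 V → α} {u v : V}

-- `HasRainbowKColoring G k j` unfolds to
-- `∃ c : Sym2 V → Fin j, ∀ u v, u ≠ v → RainbowLinked G c k u v`.
def RainbowLinked (G : SimpleGraph V) (c : Sym2 V → α) (k : ℕ) (u v : V) : Prop :=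
  ∃ P : Fin k → G.Walk u v, Injective P ∧ (∀ i, RainbowPath c (P i)) ∧
    ∀ i i', i ≠ i' → IntDisjoint (P i) (P i')

theorem IntDisjoint.symm {p q : G.Walk u v} (h : IntDisjoint p q) : IntDisjoint q p :=
  fun x hq hp => h x hp hq

theorem IntDisjoint.reverse {p q : G.Walk u v} (h : IntDisjoint p q) :
    IntDisjoint p.reverse q.reverse := fun x hp hq =>
  (h x (by simpa using hp) (by simpa using hq)).symm

theorem IntDisjoint.ne {p q : G.Walk u v} (h : IntDisjoint p q) {x : V} (hx : x ∈ p.support)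
    (hxu : x ≠ u) (hxv : x ≠ v) : p ≠ q := by
  rintro rfl
  exact (h x hx hx).elim hxu hxv

theorem SimpleGraph.Adj.intDisjoint_toWalk (h : G.Adj u v) (p : G.Walk u v) :
    IntDisjoint h.toWalk p := fun x hx _ => by simpa using hx

theorem RainbowPath.reverse {p : G.Walk u v} (h : RainbowPath c p) : RainbowPath c p.reverse :=
  ⟨h.1.reverse, by simpa using h.2⟩

theorem RainbowPath.length_le_card [Fintype α] {p : G.Walk u v} (h : RainbowPath c p) :
    p.length ≤ Fintype.card α := by
  simpa using h.2.length_le_card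

theorem RainbowLinked.symm {k : ℕ} (h : RainbowLinked G c k u v) : RainbowLinked G c k v u := by
  obtain ⟨P, hinj, hP, hd⟩ := h
  exact ⟨fun i => (P i).reverse, Walk.reverse_injective.comp hinj, fun i => (hP i).reverse,
    fun i i' h => (hd i i' h).reverse⟩

theorem SimpleGraph.Walk.eq_of_length_eq_one :
    ∀ {p q : G.Walk u v}, p.length = 1 → q.length = 1 → p = q
  | .cons _ .nil, .cons _ .nil, _, _ => rfl
  | .nil, _, hp, _ | .cons _ (.cons _ _), _, hp, _ => by simp at hp
  | _, .nil, _, hq | _, .cons _ (.cons _ _), _, hq => by simp at hq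

theorem injective_vecCons₃ {β : Type*} {a b c : β} (hab : a ≠ b) (hac : a ≠ c) (hbc : b ≠ c) :
    Injective ![a, b, c] := by
  intro i j h
  fin_cases i <;> fin_cases j <;> simp_all [eq_comm]

theorem rainbowLinked_of_commonNeighbors {k : ℕ} {w : Fin k → V} (hw : Injective w) (huv : u ≠ v)
    (hu : ∀ i, G.Adj u (w i)) (hv : ∀ i, G.Adj (w i) v) (hc : ∀ i, c s(u, w i) ≠ c s(w i, v)) :
    RainbowLinked G c k u v := by
  let P i : G.Walk u v := .cons (hu i) (.cons (hv i) .nil)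
  have hdisj : ∀ i i', i ≠ i' → IntDisjoint (P i) (P i') := by
    intro i i' hii x hx hx'
    simp only [P, Walk.support_cons, Walk.support_nil, List.mem_cons, List.not_mem_nil,
      or_false] at hx hx'
    grind [hw.ne hii]
  refine ⟨P, fun i i' h => ?_, fun i => ⟨?_, by simpa [P] using hc i⟩, hdisj⟩
  · by_contra hii
    exact (hdisj i i' hii).ne (x := w i) (by simp [P]) (hu i).ne.symm (hv i).ne h
  · simp [P, Walk.isPath_def, (hu i).ne, (hv i).ne, huv]

theorem rainbowLinked_three_of_adj (huv : G.Adj u v) {p q : G.Walk u v} (hp : RainbowPath c p)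
    (hq : RainbowPath c q) (hpq : IntDisjoint p q) (hpe : p ≠ huv.toWalk) (hqe : q ≠ huv.toWalk)
    (hne : p ≠ q) : RainbowLinked G c 3 u v := by
  have he : RainbowPath c huv.toWalk := ⟨by simp [Walk.isPath_def, huv.ne], by simp⟩
  refine ⟨![huv.toWalk, p, q], ?_, ?_, ?_⟩
  · intro i i' h
    fin_cases i <;> fin_cases i' <;> simp_all [eq_comm]
  · intro i
    fin_cases i <;> assumption
  · intro i i' h
    fin_cases i <;> fin_cases i' <;> first
      | exact absurd rfl h
      | exact huv.intDisjoint_toWalk _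
      | exact (huv.intDisjoint_toWalk _).symm
      | exact hpq
      | exact hpq.symm

theorem RainbowLinked.three_le_card [Fintype α] {k : ℕ} (hk : 2 ≤ k) (b : G.Coloring Bool)
    (hb : b u ≠ b v) (h : RainbowLinked G c k u v) : 3 ≤ Fintype.card α := by
  by_contra! hα
  obtain ⟨P, hinj, hP, -⟩ := h
  have hlen (i : Fin k) : (P i).length = 1 := by
    obtain ⟨m, hm⟩ := (b.odd_length_iff_not_congr (P i)).2 (by simpa [Bool.eq_not_iff] using hb)
    have := (hP i).length_le_card
    omega
  have h01 := hinj (Walk.eq_of_length_eq_one (hlen ⟨0, by omega⟩) (hlen ⟨1, by omega⟩))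
  simp [Fin.ext_iff] at h01

theorem HasRainbowKColoring.three_le {β γ : Type*} [Nonempty β] [Nonempty γ] {k j : ℕ}
    (hk : 2 ≤ k) (h : HasRainbowKColoring (completeBipartiteGraph β γ) k j) : 3 ≤ j := by
  obtain ⟨c, hc⟩ := h
  obtain ⟨b⟩ := ‹Nonempty β›
  obtain ⟨g⟩ := ‹Nonempty γ›
  have hlinked : RainbowLinked _ c k (inl b) (inr g) := hc _ _ (by simp)
  simpa using hlinked.three_le_card hk (CompleteBipartiteGraph.bicoloring β γ)
    (by exact Bool.false_ne_true)

section OffsetColoring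

variable {R : Type*} [CommRing R] [DecidableEq R]

def offsetColor (x : R) : Fin 3 := if x = 0 then 1 else if x = 1 then 2 else 0

def offsetColorOfVertices : R ⊕ R → R ⊕ R → Fin 3
  | inl i, inr j | inr j, inl i => offsetColor (j - i)
  | _, _ => 0

def offsetColoring : Sym2 (R ⊕ R) → Fin 3 :=
  Sym2.lift ⟨offsetColorOfVertices, by rintro (i | i) (j | j) <;> rfl⟩

@[simp] theorem offsetColoring_inl_inr (i j : R) :
    offsetColoring s(inl i, inr j) = offsetColor (j - i) := rfl

@[simp] theorem offsetColoring_inr_inl (i j : R) :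
    offsetColoring s(inr j, inl i) = offsetColor (j - i) := rfl

def detour (a j i b : R) : (completeBipartiteGraph R R).Walk (inl a) (inr b) :=
  .cons (v := inr j) (by simp) (.cons (v := inl i) (by simp) (.cons (by simp) .nil))

def IsRainbowDetour (a j i b : R) : Prop :=
  i ≠ a ∧ j ≠ b ∧ [offsetColor (j - a), offsetColor (j - i), offsetColor (b - i)].Nodup

theorem IsRainbowDetour.rainbowPath {a j i b : R} (h : IsRainbowDetour a j i b) :
    RainbowPath offsetColoring (detour a j i b) :=
  ⟨by simp [detour, Walk.isPath_def, h.1.symm, h.2.1], by simpa [detour] using h.2.2⟩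

theorem IsRainbowDetour.add_left {a j i b : R} (h : IsRainbowDetour a j i b) (t : R) :
    IsRainbowDetour (t + a) (t + j) (t + i) (t + b) := by
  simpa [IsRainbowDetour] using h

omit [CommRing R] [DecidableEq R] in
theorem intDisjoint_detour {a b j₁ i₁ j₂ i₂ : R} (hj : j₁ ≠ j₂) (hi : i₁ ≠ i₂) :
    IntDisjoint (detour a j₁ i₁ b) (detour a j₂ i₂ b) := by
  intro x hx hx'
  simp only [detour, Walk.support_cons, Walk.support_nil, List.mem_cons, List.not_mem_nil,
    or_false] at hx hx'
  grind

variable (h2 : (2 : R) ≠ 0)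
include h2

theorem exists_three_offsetColor_ne {e : R} (he : e ≠ 0) :
    ∃ x : Fin 3 → R, Injective x ∧ ∀ i, offsetColor (x i) ≠ offsetColor (x i + e) := by
  have : Nontrivial R := ⟨⟨2, 0, h2⟩⟩
  have h21 : (2 : R) ≠ 1 := fun h => one_ne_zero (α := R) (by linear_combination h)
  have hn1 : (-1 : R) ≠ 1 := fun h => h2 (by linear_combination -h)
  by_cases he' : e = -1
  · refine ⟨![0, 1, 2], injective_vecCons₃ zero_ne_one h2.symm h21.symm, fun i => ?_⟩
    fin_cases i <;> norm_num [offsetColor, he', hn1, h2, h21] <;> decide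
  · have he'' : -e ≠ 1 := fun h => he' (by linear_combination -h)
    refine ⟨![0, 1, -e], injective_vecCons₃ zero_ne_one (by simpa [eq_comm] using he) he''.symm,
      fun i => ?_⟩
    fin_cases i <;> norm_num [offsetColor, he, he''] <;> split_ifs <;> decide

theorem exists_two_rainbow_detours_from_zero (d : R) : ∃ y₁ z₁ y₂ z₂ : R, y₁ ≠ y₂ ∧ z₁ ≠ z₂ ∧
    IsRainbowDetour 0 y₁ z₁ d ∧ IsRainbowDetour 0 y₂ z₂ d := by
  have : Nontrivial R := ⟨⟨2, 0, h2⟩⟩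
  have h21 : (2 : R) ≠ 1 := fun h => one_ne_zero (α := R) (by linear_combination h)
  have hn1 : (-1 : R) ≠ 1 := fun h => h2 (by linear_combination -h)
  simp only [IsRainbowDetour, List.nodup_cons, List.mem_cons, List.not_mem_nil, or_false,
    List.nodup_nil, not_or, and_true, offsetColor, sub_zero]
  by_cases hd0 : d = 0
  · refine ⟨-1, -1, 1, 1, ?_⟩
    norm_num [hd0, hn1]; decide
  by_cases hd1 : d = 1
  · refine ⟨0, -1, 2, 1, ?_⟩
    norm_num [hd1, hn1, h2, h2.symm, h21]; decide
  by_cases hd2 : d = 2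
  · refine ⟨1, 2, 0, 1, ?_⟩
    norm_num [hd2, hn1, h2, h2.symm, h21, h21.symm]; decide
  refine ⟨1, d, d - 1, d - 1, ?_⟩
  norm_num [hd0, hd1, Ne.symm hd1, hd2, Ne.symm hd2, sub_eq_zero, sub_eq_iff_eq_add,
    eq_sub_iff_add_eq]
  decide

theorem rainbowLinked_inl_inl {a b : R} (hab : a ≠ b) :
    RainbowLinked (completeBipartiteGraph R R) offsetColoring 3 (inl a) (inl b) := by
  obtain ⟨x, hx, hc⟩ := exists_three_offsetColor_ne h2 (sub_ne_zero.2 hab)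
  refine rainbowLinked_of_commonNeighbors (w := fun i => inr (a + x i))
    (inr_injective.comp ((add_right_injective a).comp hx)) (by simpa using hab)
    (fun _ => by simp) (fun _ => by simp) fun i => ?_
  simp only [offsetColoring_inl_inr, offsetColoring_inr_inl]
  convert hc i using 2 <;> ring

theorem rainbowLinked_inr_inr {a b : R} (hab : a ≠ b) :
    RainbowLinked (completeBipartiteGraph R R) offsetColoring 3 (inr a) (inr b) := by
  obtain ⟨x, hx, hc⟩ := exists_three_offsetColor_ne h2 (sub_ne_zero.2 hab.symm)
  refine rainbowLinked_of_commonNeighbors (w := fun i => inl (a - x i))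
    (inl_injective.comp ((sub_right_injective (b := a)).comp hx)) (by simpa using hab)
    (fun _ => by simp) (fun _ => by simp) fun i => ?_
  simp only [offsetColoring_inl_inr, offsetColoring_inr_inl]
  convert hc i using 2 <;> ring

theorem rainbowLinked_inl_inr (a b : R) :
    RainbowLinked (completeBipartiteGraph R R) offsetColoring 3 (inl a) (inr b) := by
  obtain ⟨y₁, z₁, y₂, z₂, hy, hz, h₁, h₂⟩ := exists_two_rainbow_detours_from_zero h2 (b - a)
  replace h₁ := h₁.add_left a
  replace h₂ := h₂.add_left a
  rw [add_zero, add_sub_cancel] at h₁ h₂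
  have hj : a + y₁ ≠ a + y₂ := by simpa using hy
  have hi : a + z₁ ≠ a + z₂ := by simpa using hz
  have hab : (completeBipartiteGraph R R).Adj (inl a) (inr b) := by simp
  have hne_edge {j i : R} (h : IsRainbowDetour a j i b) : detour a j i b ≠ hab.toWalk :=
    (hab.intDisjoint_toWalk _).symm.ne (x := inr j) (by simp [detour]) (by simp)
      (by simpa using h.2.1)
  exact rainbowLinked_three_of_adj hab h₁.rainbowPath h₂.rainbowPath (intDisjoint_detour hj hi)
    (hne_edge h₁) (hne_edge h₂)
    ((intDisjoint_detour hj hi).ne (x := inr (a + y₁)) (by simp [detour]) (by simp)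
      (by simpa using h₁.2.1))

theorem hasRainbowKColoring_completeBipartiteGraph :
    HasRainbowKColoring (completeBipartiteGraph R R) 3 3 := by
  refine ⟨offsetColoring, ?_⟩
  rintro (a | a) (b | b) hab
  · exact rainbowLinked_inl_inl h2 (by simpa using hab)
  · exact rainbowLinked_inl_inr h2 a b
  · exact (rainbowLinked_inl_inr h2 b a).symm
  · exact rainbowLinked_inr_inr h2 (by simpa using hab)

end OffsetColoring

theorem stmt3 (r : ℕ) (hr : 3 ≤ r) : rck (Krr r) 3 = 3 := by
  have : NeZero r := ⟨by omega⟩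
  let := Fin.instCommRing r
  have h2 : (2 : Fin r) ≠ 0 := by simp [Fin.ext_iff, Nat.mod_eq_of_lt (show 2 < r by omega)]
  have hupper := hasRainbowKColoring_completeBipartiteGraph h2
  exact le_antisymm (Nat.sInf_le hupper)
    (le_csInf ⟨3, hupper⟩ fun _ => HasRainbowKColoring.three_le (by norm_num))
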